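/- arXiv:2006.16909 — 2 statements merged into one kernel-verified Lean document; each statement's English description precedes it below -/
import Mathlib

section
/- A vertex-colored digraph (G,σ) is a best match graph if and only if (i) (G,σ) is sf-colored and (ii) there exists a leaf-colored tree on the vertex set of G that displays every informative triple of (G,σ) and none of the forbidden triples of (G,σ). -/
/-- A rooted (phylogenetic) tree on leaf set `V`, encoded by its hierarchy of
clusters `L(T(v))`, `v ∈ V(T)`: a rooted tree on leaf set `V` corresponds
exactly to a family of nonempty, pairwise compatible subsets of `V` containing
all singletons and `V` itself.  Together with a coloring `σ : V → M` this is a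
leaf-colored tree. -/
structure PhyloTree (V : Type) where
  clusters : Set (Set V)
  compat : ∀ p ∈ clusters, ∀ q ∈ clusters, p ⊆ q ∨ q ⊆ p ∨ p ∩ q = ∅
  singleton_mem : ∀ v : V, {v} ∈ clusters
  univ_mem : Set.univ ∈ clusters
  nonempty_mem : ∀ p ∈ clusters, p.Nonempty

namespace PhyloTree

variable {V M : Type}

/-- The cluster `L(T(lca(x,y)))` of the last common ancestor of `x` and `y`;
for inner vertices `u,v` of a tree one has `u ⪯_T v ↔ L(T(u)) ⊆ L(T(v))`. -/
def lcaSet (T : PhyloTree V) (x y : V) : Set V :=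
  ⋂₀ {p : Set V | p ∈ T.clusters ∧ x ∈ p ∧ y ∈ p}

/-- `T` displays the triple `xy|z`, i.e. `lca(x,y) ≺ lca(x,z) = lca(y,z)`. -/
def Displays (T : PhyloTree V) (x y z : V) : Prop :=
  T.lcaSet x y ⊂ T.lcaSet x z ∧ T.lcaSet x z = T.lcaSet y z

/-- `y` is a best match of `x` in the leaf-colored tree `(T,σ)`. -/
def BestMatch (T : PhyloTree V) (σ : V → M) (x y : V) : Prop :=
  σ x ≠ σ y ∧ ∀ y' : V, σ y' = σ y → T.lcaSet x y ⊆ T.lcaSet x y'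

end PhyloTree

variable {V M : Type}

/-- `(T,σ)` explains `(G,σ)`, i.e. `(G,σ) = G(T,σ)`. -/
def Explains (T : PhyloTree V) (σ : V → M) (G : V → V → Prop) : Prop :=
  ∀ x y : V, G x y ↔ T.BestMatch σ x y

/-- `(G,σ)` is a best match graph. -/
def IsBMG (G : V → V → Prop) (σ : V → M) : Prop :=
  ∃ T : PhyloTree V, Explains T σ G

/-- The triple `xy|y'` is informative for `(G,σ)`. -/
def InformativeTriple (G : V → V → Prop) (σ : V → M) (x y y' : V) : Prop :=
  x ≠ y ∧ x ≠ y' ∧ y ≠ y' ∧ σ x ≠ σ y ∧ σ y = σ y' ∧ G x y ∧ ¬ G x y'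

/-- The triple `xy|y'` is forbidden for `(G,σ)`. -/
def ForbiddenTriple (G : V → V → Prop) (σ : V → M) (x y y' : V) : Prop :=
  x ≠ y ∧ x ≠ y' ∧ y ≠ y' ∧ σ x ≠ σ y ∧ σ y = σ y' ∧ G x y ∧ G x y'

/-- `(G,σ)` is sf-colored: `σ` is proper and every vertex has an out-neighbor
of every color present in the graph other than its own. -/
def SfColored (G : V → V → Prop) (σ : V → M) : Prop :=
  (∀ x y : V, G x y → σ x ≠ σ y) ∧
  ∀ (x : V) (s : M), (∃ v : V, σ v = s) → s ≠ σ x → ∃ y : V, σ y = s ∧ G x y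

/-!
For a fixed leaf `x`, all clusters `lcaSet x y` contain `x` and hence form a chain, and `T`
displays `xy|z` exactly when `lcaSet x y ⊂ lcaSet x z`. So `y` is a best match of `x` iff
`σ x ≠ σ y` and no `y'` of the color of `y` gives a displayed triple `xy'|y`. In a BMG, an
informative triple `xy|y'` then comes from a `y''` with `lcaSet x y ⊆ lcaSet x y'' ⊂ lcaSet x y'`,
and a forbidden one cannot be displayed since `y'` is a best match too. Conversely, an arc
`(x,y)` is a best match because every rival `y'` gives a forbidden or an informative triple
excluding `xy'|y`, and a best match `y` is an arc because sf-coloredness provides an arc `(x,y'')`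
with `σ y'' = σ y`, and `(x,y)` missing would make `xy''|y` informative.
-/

lemma Set.exists_min_image_of_total {ι α : Type*} [Preorder α] {s : Set ι} (f : ι → α)
    (hs : s.Finite) (hne : s.Nonempty) (htot : ∀ i ∈ s, ∀ j ∈ s, f i ≤ f j ∨ f j ≤ f i) :
    ∃ i ∈ s, ∀ j ∈ s, f i ≤ f j := by
  obtain ⟨i, hi, hmin⟩ := hs.exists_minimalFor f s hne
  exact ⟨i, hi, fun j hj => (htot i hi j hj).elim id (hmin hj)⟩

namespace PhyloTree

variable (T : PhyloTree V) {σ : V → M} {x y z : V} {p q : Set V}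

lemma subset_or_subset_of_inter_nonempty (hp : p ∈ T.clusters) (hq : q ∈ T.clusters)
    (h : (p ∩ q).Nonempty) : p ⊆ q ∨ q ⊆ p :=
  (T.compat p hp q hq).imp_right (Or.resolve_right · h.ne_empty)

lemma lcaSet_subset (hp : p ∈ T.clusters) (hx : x ∈ p) (hy : y ∈ p) : T.lcaSet x y ⊆ p :=
  Set.sInter_subset_of_mem ⟨hp, hx, hy⟩

section Finite

variable [Finite V]

lemma isLeast_lcaSet (x y : V) :
    IsLeast {p | p ∈ T.clusters ∧ x ∈ p ∧ y ∈ p} (T.lcaSet x y) := by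
  set S := {p | p ∈ T.clusters ∧ x ∈ p ∧ y ∈ p}
  obtain ⟨p, hp, hleast⟩ := Set.exists_min_image_of_total id (Set.toFinite S)
    ⟨Set.univ, T.univ_mem, trivial, trivial⟩
    fun p (hp : p ∈ S) q (hq : q ∈ S) =>
      T.subset_or_subset_of_inter_nonempty hp.1 hq.1 ⟨x, hp.2.1, hq.2.1⟩
  have hp_least : IsLeast S p := ⟨hp, hleast⟩
  rwa [lcaSet, ← Set.sInf_eq_sInter, hp_least.isGLB.sInf_eq]

lemma lcaSet_mem_clusters (x y : V) : T.lcaSet x y ∈ T.clusters :=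
  (T.isLeast_lcaSet x y).1.1

lemma left_mem_lcaSet (x y : V) : x ∈ T.lcaSet x y :=
  (T.isLeast_lcaSet x y).1.2.1

lemma right_mem_lcaSet (x y : V) : y ∈ T.lcaSet x y :=
  (T.isLeast_lcaSet x y).1.2.2

lemma lcaSet_subset_lcaSet_iff_mem : T.lcaSet x z ⊆ T.lcaSet x y ↔ z ∈ T.lcaSet x y :=
  ⟨fun h => h (T.right_mem_lcaSet x z),
    T.lcaSet_subset (T.lcaSet_mem_clusters x y) (T.left_mem_lcaSet x y)⟩

lemma lcaSet_total (x y z : V) : T.lcaSet x y ⊆ T.lcaSet x z ∨ T.lcaSet x z ⊆ T.lcaSet x y :=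
  T.subset_or_subset_of_inter_nonempty (T.lcaSet_mem_clusters x y) (T.lcaSet_mem_clusters x z)
    ⟨x, T.left_mem_lcaSet x y, T.left_mem_lcaSet x z⟩

lemma lcaSet_subset_lcaSet_iff_not_ssubset :
    T.lcaSet x y ⊆ T.lcaSet x z ↔ ¬ T.lcaSet x z ⊂ T.lcaSet x y := by
  refine ⟨fun h h' => h'.not_subset h, fun h => ?_⟩
  rcases T.lcaSet_total x y z with hyz | hzy
  · exact hyz
  · exact (eq_of_le_of_not_lt hzy h).ge

lemma displays_iff_lcaSet_ssubset : T.Displays x y z ↔ T.lcaSet x y ⊂ T.lcaSet x z := by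
  refine ⟨And.left, fun h => ⟨h, subset_antisymm ?_ ?_⟩⟩
  · have hx : x ∈ T.lcaSet y z := by
      rcases T.subset_or_subset_of_inter_nonempty (T.lcaSet_mem_clusters y z)
        (T.lcaSet_mem_clusters x y) ⟨y, T.left_mem_lcaSet y z, T.right_mem_lcaSet x y⟩ with
        hzy | hyz
      · exact absurd (T.lcaSet_subset_lcaSet_iff_mem.2 (hzy (T.right_mem_lcaSet y z))) h.not_subset
      · exact hyz (T.left_mem_lcaSet x y)
    exact T.lcaSet_subset (T.lcaSet_mem_clusters y z) hx (T.right_mem_lcaSet y z)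
  · exact T.lcaSet_subset (T.lcaSet_mem_clusters x z) (h.subset (T.right_mem_lcaSet x y))
      (T.right_mem_lcaSet x z)

lemma bestMatch_iff_forall_not_displays :
    T.BestMatch σ x y ↔ σ x ≠ σ y ∧ ∀ y', σ y' = σ y → ¬ T.Displays x y' y := by
  simp only [BestMatch, displays_iff_lcaSet_ssubset, lcaSet_subset_lcaSet_iff_not_ssubset]

lemma exists_bestMatch {v : V} (hv : σ v ≠ σ x) : ∃ y, σ y = σ v ∧ T.BestMatch σ x y := by
  obtain ⟨y, hy, hleast⟩ := Set.exists_min_image_of_total (T.lcaSet x)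
    (Set.toFinite {y | σ y = σ v}) ⟨v, rfl⟩ fun y _ y' _ => T.lcaSet_total x y y'
  exact ⟨y, hy, fun h => hv (hy ▸ h.symm), fun y' hy' => hleast y' (hy'.trans hy)⟩

end Finite

end PhyloTree

section BestMatchGraph

variable {T : PhyloTree V} {σ : V → M} {G : V → V → Prop} {x y y' : V}

lemma informativeTriple_of_ne (hyy' : y ≠ y') (hxy : σ x ≠ σ y) (hσyy' : σ y = σ y')
    (hGxy : G x y) (hGxy' : ¬ G x y') : InformativeTriple G σ x y y' :=
  ⟨ne_of_apply_ne σ hxy, ne_of_apply_ne σ (hσyy' ▸ hxy), hyy', hxy, hσyy', hGxy, hGxy'⟩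

lemma forbiddenTriple_of_ne (hyy' : y ≠ y') (hxy : σ x ≠ σ y) (hσyy' : σ y = σ y')
    (hGxy : G x y) (hGxy' : G x y') : ForbiddenTriple G σ x y y' :=
  ⟨ne_of_apply_ne σ hxy, ne_of_apply_ne σ (hσyy' ▸ hxy), hyy', hxy, hσyy', hGxy, hGxy'⟩

variable [Finite V]

namespace Explains

lemma sfColored (hT : Explains T σ G) : SfColored G σ := by
  refine ⟨fun x y hxy => ((hT x y).1 hxy).1, ?_⟩
  rintro x s ⟨v, rfl⟩ hv
  obtain ⟨y, hy, hxy⟩ := T.exists_bestMatch hv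
  exact ⟨y, hy, (hT x y).2 hxy⟩

lemma displays_of_informativeTriple (hT : Explains T σ G)
    (h : InformativeTriple G σ x y y') : T.Displays x y y' := by
  obtain ⟨-, -, -, hxy, hyy', hGxy, hGxy'⟩ := h
  have hbest : T.BestMatch σ x y := (hT x y).1 hGxy
  have hnot_best : ¬ T.BestMatch σ x y' := mt (hT x y').2 hGxy'
  rw [T.bestMatch_iff_forall_not_displays] at hnot_best
  push Not at hnot_best
  obtain ⟨y'', hy'', hdisp⟩ := hnot_best (hyy' ▸ hxy)
  rw [T.displays_iff_lcaSet_ssubset] at hdisp ⊢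
  exact (hbest.2 y'' (hy''.trans hyy'.symm)).trans_ssubset hdisp

lemma not_displays_of_forbiddenTriple (hT : Explains T σ G)
    (h : ForbiddenTriple G σ x y y') : ¬ T.Displays x y y' := by
  obtain ⟨-, -, -, -, hyy', -, hGxy'⟩ := h
  exact (T.bestMatch_iff_forall_not_displays.1 ((hT x y').1 hGxy')).2 y hyy'

end Explains

lemma explains_of_sfColored_of_compatible (hG : SfColored G σ)
    (hinf : ∀ x y y', InformativeTriple G σ x y y' → T.Displays x y y')
    (hforb : ∀ x y y', ForbiddenTriple G σ x y y' → ¬ T.Displays x y y') :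
    Explains T σ G := by
  intro x y
  rw [T.bestMatch_iff_forall_not_displays]
  constructor
  · intro hGxy
    have hxy := hG.1 x y hGxy
    refine ⟨hxy, fun y' hy' hdisp => ?_⟩
    obtain rfl | hne := eq_or_ne y' y
    · exact hdisp.1.ne rfl
    by_cases hGxy' : G x y'
    · exact hforb x y' y (forbiddenTriple_of_ne hne (hy' ▸ hxy) hy' hGxy' hGxy) hdisp
    · exact (hinf x y y' (informativeTriple_of_ne hne.symm hxy hy'.symm hGxy hGxy')).1.asymm
        hdisp.1
  · rintro ⟨hxy, hbest⟩
    obtain ⟨y'', hy'', hGxy''⟩ := hG.2 x (σ y) ⟨y, rfl⟩ hxy.symm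
    obtain rfl | hne := eq_or_ne y'' y
    · exact hGxy''
    by_contra hGxy
    exact hbest y'' hy'' (hinf x y'' y (informativeTriple_of_ne hne (hy'' ▸ hxy) hy'' hGxy'' hGxy))

end BestMatchGraph

/-- `(G,σ)` is a BMG iff it is sf-colored and there is a tree on
its vertex set displaying all informative and none of the forbidden triples. -/
theorem isBMG_iff_sfColored_and_compatible [Fintype V]
    (G : V → V → Prop) (σ : V → M) :
    IsBMG G σ ↔
      (SfColored G σ ∧
        ∃ T : PhyloTree V,
          (∀ x y y' : V, InformativeTriple G σ x y y' → T.Displays x y y') ∧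
          (∀ x y y' : V, ForbiddenTriple G σ x y y' → ¬ T.Displays x y y')) := by
  constructor
  · rintro ⟨T, hT⟩
    exact ⟨hT.sfColored, T, fun _ _ _ => hT.displays_of_informativeTriple,
      fun _ _ _ => hT.not_displays_of_forbiddenTriple⟩
  · rintro ⟨hG, T, hinf, hforb⟩
    exact ⟨T, explains_of_sfColored_of_compatible hG hinf hforb⟩
end

section
/- Let (G,σ) be a properly 2-colored digraph that contains neither an induced F1-graph nor an induced F3-graph. Then (G,σ) satisfies condition (N3): for any two thinness classes α and β with α∩N(N(β))=β∩N(N(α))=∅ and N(α)∩N(β)≠∅, it holds that N⁻(α)=N⁻(β), and N(α)⊆N(β) or N(β)⊆N(α). -/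
/-! A common out-neighbour `w` of `a` and `b` puts `a` and `b` in one colour class. A vertex in
`N⁻(a) \ N⁻(b)` then spans an induced F1-graph with `w`, `a`, `b`, because `a ∉ N(N(b))` rules out
the arc from `b` to it; and vertices `u ∈ N(a) \ N(b)`, `v ∈ N(b) \ N(a)` span an induced F3-graph
with `a`, `b`, `w`. -/

variable {V M : Type}

/-- Out-neighborhood `N(x)`. -/
def outN (G : V → V → Prop) (x : V) : Set V := {y | G x y}

/-- In-neighborhood `N⁻(x)`. -/
def inN (G : V → V → Prop) (x : V) : Set V := {y | G y x}

/-- Out-neighborhood of a set of vertices. -/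
def outNS (G : V → V → Prop) (A : Set V) : Set V := {y | ∃ x ∈ A, G x y}

/-- The thinness class of the vertex `a`: all vertices with the same out- and
in-neighborhood as `a`. -/
def thinClass (G : V → V → Prop) (a : V) : Set V :=
  {v | outN G v = outN G a ∧ inN G v = inN G a}

/-- `(G,σ)` contains an induced F1-graph. -/
def HasF1 (G : V → V → Prop) (σ : V → M) : Prop :=
  ∃ x1 x2 y1 y2 : V,
    x1 ≠ x2 ∧ y1 ≠ y2 ∧
    σ x1 = σ x2 ∧ σ y1 = σ y2 ∧ σ x1 ≠ σ y1 ∧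
    ¬ G x1 x2 ∧ ¬ G x2 x1 ∧ ¬ G y1 y2 ∧ ¬ G y2 y1 ∧
    G x1 y1 ∧ G y2 x2 ∧ G y1 x2 ∧ ¬ G x1 y2 ∧ ¬ G y2 x1

/-- `(G,σ)` contains an induced F2-graph. -/
def HasF2 (G : V → V → Prop) (σ : V → M) : Prop :=
  ∃ x1 x2 y1 y2 : V,
    x1 ≠ x2 ∧ y1 ≠ y2 ∧
    σ x1 = σ x2 ∧ σ y1 = σ y2 ∧ σ x1 ≠ σ y1 ∧
    ¬ G x1 x2 ∧ ¬ G x2 x1 ∧ ¬ G y1 y2 ∧ ¬ G y2 y1 ∧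
    G x1 y1 ∧ G y1 x2 ∧ G x2 y2 ∧ ¬ G x1 y2

/-- `(G,σ)` contains an induced F3-graph. -/
def HasF3 (G : V → V → Prop) (σ : V → M) : Prop :=
  ∃ x1 x2 y1 y2 y3 : V,
    x1 ≠ x2 ∧ y1 ≠ y2 ∧ y1 ≠ y3 ∧ y2 ≠ y3 ∧
    σ x1 = σ x2 ∧ σ y1 = σ y2 ∧ σ y2 = σ y3 ∧ σ x1 ≠ σ y1 ∧
    ¬ G x1 x2 ∧ ¬ G x2 x1 ∧ ¬ G y1 y2 ∧ ¬ G y2 y1 ∧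
    ¬ G y1 y3 ∧ ¬ G y3 y1 ∧ ¬ G y2 y3 ∧ ¬ G y3 y2 ∧
    G x1 y1 ∧ G x2 y2 ∧ G x1 y3 ∧ G x2 y3 ∧ ¬ G x1 y2 ∧ ¬ G x2 y1

theorem Bool.eq_of_ne_of_ne {p q r : Bool} (hp : p ≠ r) (hq : q ≠ r) : p = q :=
  (Bool.eq_not_of_ne hp).trans (Bool.eq_not_of_ne hq).symm

theorem mem_thinClass_self (G : V → V → Prop) (a : V) : a ∈ thinClass G a :=
  ⟨rfl, rfl⟩

section ProperColoring

variable {G : V → V → Prop} {σ : V → Bool} {a b w : V}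

theorem not_adj_of_color_eq (hσ : ∀ x y : V, G x y → σ x ≠ σ y) {x y : V} (h : σ x = σ y) :
    ¬ G x y :=
  fun hxy => hσ x y hxy h

theorem color_eq_of_adj_of_adj (hσ : ∀ x y : V, G x y → σ x ≠ σ y) {x y : V} (hx : G x w)
    (hy : G y w) : σ x = σ y :=
  Bool.eq_of_ne_of_ne (hσ x w hx) (hσ y w hy)

theorem inN_subset_inN_of_not_hasF1 (hσ : ∀ x y : V, G x y → σ x ≠ σ y) (hF1 : ¬ HasF1 G σ)
    (hab : a ≠ b) (haw : G a w) (hbw : G b w) (ha : a ∉ outNS G (outN G b)) :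
    inN G a ⊆ inN G b := by
  intro z (hza : G z a)
  by_contra hzb
  have hbz : ¬ G b z := fun hbz => ha ⟨z, hbz, hza⟩
  have hzw : z ≠ w := by rintro rfl; exact ha ⟨z, hbw, hza⟩
  have hσab : σ a = σ b := color_eq_of_adj_of_adj hσ haw hbw
  have hσzw : σ z = σ w := Bool.eq_of_ne_of_ne (hσ z a hza) (hσ a w haw).symm
  exact hF1 ⟨z, w, a, b, hzw, hab, hσzw, hσab, hσ z a hza,
    not_adj_of_color_eq hσ hσzw, not_adj_of_color_eq hσ hσzw.symm,
    not_adj_of_color_eq hσ hσab, not_adj_of_color_eq hσ hσab.symm,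
    hza, hbw, haw, hzb, hbz⟩

theorem outN_subset_or_subset_of_not_hasF3 (hσ : ∀ x y : V, G x y → σ x ≠ σ y)
    (hF3 : ¬ HasF3 G σ) (hab : a ≠ b) (haw : G a w) (hbw : G b w) :
    outN G a ⊆ outN G b ∨ outN G b ⊆ outN G a := by
  refine or_iff_not_imp_left.2 fun hnsub v (hbv : G b v) => ?_
  by_contra hav
  obtain ⟨u, hau, hbu⟩ := Set.not_subset.1 hnsub
  have hσab : σ a = σ b := color_eq_of_adj_of_adj hσ haw hbw
  have hσuv : σ u = σ v := Bool.eq_of_ne_of_ne (hσab ▸ (hσ a u hau).symm) (hσ b v hbv).symm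
  have hσvw : σ v = σ w := Bool.eq_of_ne_of_ne (hσ b v hbv).symm (hσ b w hbw).symm
  have hσuw : σ u = σ w := hσuv.trans hσvw
  exact hF3 ⟨a, b, u, v, w, hab, fun h => hav (h ▸ hau), fun h => hbu (h ▸ hbw),
    fun h => hav (h ▸ haw), hσab, hσuv, hσvw, hσ a u hau,
    not_adj_of_color_eq hσ hσab, not_adj_of_color_eq hσ hσab.symm,
    not_adj_of_color_eq hσ hσuv, not_adj_of_color_eq hσ hσuv.symm,
    not_adj_of_color_eq hσ hσuw, not_adj_of_color_eq hσ hσuw.symm,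
    not_adj_of_color_eq hσ hσvw, not_adj_of_color_eq hσ hσvw.symm,
    hau, hbv, haw, hbw, hav, hbu⟩

end ProperColoring

theorem N3_of_no_F1_F3_general (G : V → V → Prop) (σ : V → Bool)
    (hproper : ∀ x y : V, G x y → σ x ≠ σ y)
    (hF1 : ¬ HasF1 G σ) (hF3 : ¬ HasF3 G σ) :
    ∀ a b : V,
      thinClass G a ∩ outNS G (outN G b) = ∅ →
      thinClass G b ∩ outNS G (outN G a) = ∅ →
      (outN G a ∩ outN G b).Nonempty →
      inN G a = inN G b ∧ (outN G a ⊆ outN G b ∨ outN G b ⊆ outN G a) := by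
  intro a b hab_empty hba_empty ⟨w, haw, hbw⟩
  rcases eq_or_ne a b with rfl | hab
  · exact ⟨rfl, .inl subset_rfl⟩
  have ha : a ∉ outNS G (outN G b) := fun h =>
    hab_empty.subset ⟨mem_thinClass_self G a, h⟩
  have hb : b ∉ outNS G (outN G a) := fun h =>
    hba_empty.subset ⟨mem_thinClass_self G b, h⟩
  exact ⟨(inN_subset_inN_of_not_hasF1 hproper hF1 hab haw hbw ha).antisymm
      (inN_subset_inN_of_not_hasF1 hproper hF1 hab.symm hbw haw hb),
    outN_subset_or_subset_of_not_hasF3 hproper hF3 hab haw hbw⟩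

/-- A properly 2-colored digraph without induced F1- and
F3-graphs satisfies (N3). -/
theorem N3_of_no_F1_F3 [Fintype V] (G : V → V → Prop) (σ : V → Bool)
    (hproper : ∀ x y : V, G x y → σ x ≠ σ y)
    (hsurj : Function.Surjective σ)
    (hF1 : ¬ HasF1 G σ) (hF3 : ¬ HasF3 G σ) :
    ∀ a b : V,
      thinClass G a ∩ outNS G (outN G b) = ∅ →
      thinClass G b ∩ outNS G (outN G a) = ∅ →
      (outN G a ∩ outN G b).Nonempty →
      inN G a = inN G b ∧ (outN G a ⊆ outN G b ∨ outN G b ⊆ outN G a) :=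
  N3_of_no_F1_F3_general G σ hproper hF1 hF3
end
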